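/- arXiv:1605.05164 — 5 statements merged into one kernel-verified Lean document; each statement's English description precedes it below -/
import Mathlib

section
/- If A ∈ ℝ^{m×n} with m ≥ n and J = diag(I_p, −I_q) with p + q = m is a signature matrix, and AᵀJA is positive definite, then the submatrix A(1:p, 1:n) (the first p rows of A) has full column rank n; in particular p ≥ n and A has full column rank. -/
open Matrix

/-!
Write `A₁, A₂` for the first `p` and the last `q` rows of `A`, so that
`xᴴ (Aᴴ J A) x = ‖A₁ x‖² - ‖A₂ x‖²`. A vector in the kernel of `A₁` makes this form
nonpositive, so positive definiteness forces `A₁` to be injective, i.e. of full column rank `n`;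
this bounds `p` from below and, since `A₁` is a submatrix of `A`, also the rank of `A`.
-/

namespace Matrix

variable {R m₁ m₂ n : Type*} [Fintype m₁] [Fintype m₂] [DecidableEq m₁] [DecidableEq m₂]

theorem conjTranspose_mul_fromBlocks_one_neg_one_mul [CommRing R] [StarRing R]
    (A : Matrix (m₁ ⊕ m₂) n R) :
    Aᴴ * (fromBlocks 1 0 0 (-1) : Matrix (m₁ ⊕ m₂) (m₁ ⊕ m₂) R) * A =
      A.toRows₁ᴴ * A.toRows₁ - A.toRows₂ᴴ * A.toRows₂ := by
  conv_lhs => rw [← fromRows_toRows A]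
  rw [conjTranspose_fromRows_eq_fromCols_conjTranspose, fromCols_mul_fromBlocks,
    fromCols_mul_fromRows]
  simp [sub_eq_add_neg]

theorem star_dotProduct_conjTranspose_mul_mulVec [Fintype n] [CommRing R] [StarRing R]
    {k : Type*} [Fintype k] (B : Matrix k n R) (x : n → R) :
    star x ⬝ᵥ (Bᴴ * B) *ᵥ x = star (B *ᵥ x) ⬝ᵥ B *ᵥ x := by
  rw [← mulVec_mulVec, dotProduct_mulVec, star_mulVec]

theorem toRows₁_mulVec_injective_of_posDef [Fintype n] [CommRing R] [PartialOrder R]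
    [StarRing R] [StarOrderedRing R] {A : Matrix (m₁ ⊕ m₂) n R}
    (hA : (Aᴴ * (fromBlocks 1 0 0 (-1) : Matrix (m₁ ⊕ m₂) (m₁ ⊕ m₂) R) * A).PosDef) :
    Function.Injective A.toRows₁.mulVecLin := by
  rw [← LinearMap.ker_eq_bot, ker_mulVecLin_eq_bot_iff]
  intro x hx
  by_contra hx₀
  have hpos := hA.dotProduct_mulVec_pos hx₀
  rw [conjTranspose_mul_fromBlocks_one_neg_one_mul, sub_mulVec, dotProduct_sub,
    star_dotProduct_conjTranspose_mul_mulVec, star_dotProduct_conjTranspose_mul_mulVec, hx,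
    dotProduct_zero, zero_sub, neg_pos] at hpos
  exact hpos.not_ge (dotProduct_star_self_nonneg _)

theorem rank_eq_card_width_of_injective [Fintype n] [CommRing R] [StrongRankCondition R]
    {k : Type*} [Fintype k] {B : Matrix k n R} (hB : Function.Injective B.mulVecLin) :
    B.rank = Fintype.card n := by
  rw [rank, LinearMap.finrank_range_of_inj hB, Module.finrank_fintype_fun_eq_card]

end Matrix

theorem ils_posDef_implies_full_rank_general {p q n : ℕ}
    (A : Matrix (Fin p ⊕ Fin q) (Fin n) ℝ)
    (J : Matrix (Fin p ⊕ Fin q) (Fin p ⊕ Fin q) ℝ)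
    (hJ : J = Matrix.fromBlocks 1 0 0 (-1))
    (hPD : (Aᵀ * J * A).PosDef) :
    (A.submatrix Sum.inl id).rank = n ∧ n ≤ p ∧ A.rank = n := by
  subst hJ
  rw [← conjTranspose_eq_transpose_of_trivial] at hPD
  have hA₁ : (A.submatrix Sum.inl id).rank = n :=
    (rank_eq_card_width_of_injective (toRows₁_mulVec_injective_of_posDef hPD)).trans
      (Fintype.card_fin n)
  refine ⟨hA₁, hA₁ ▸ rank_le_height _, le_antisymm ?_ ?_⟩
  · simpa using A.rank_le_card_width
  · exact hA₁.symm.le.trans (rank_submatrix_le A Sum.inl id)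

/-- If `A ∈ ℝ^{m×n}` (with `m = p + q ≥ n`, rows indexed by `Fin p ⊕ Fin q`),
`J = diag(I_p, −I_q)` is a signature matrix, and `AᵀJA` is positive definite,
then the first `p` rows of `A` form a matrix of full column rank `n`;
in particular `p ≥ n` and `A` has full column rank. -/
theorem ils_posDef_implies_full_rank {p q n : ℕ}
    (A : Matrix (Fin p ⊕ Fin q) (Fin n) ℝ)
    (hmn : n ≤ p + q)
    (J : Matrix (Fin p ⊕ Fin q) (Fin p ⊕ Fin q) ℝ)
    (hJ : J = Matrix.fromBlocks 1 0 0 (-1))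
    (hPD : (Aᵀ * J * A).PosDef) :
    (A.submatrix Sum.inl id).rank = n ∧ n ≤ p ∧ A.rank = n :=
  ils_posDef_implies_full_rank_general A J hJ hPD
end

section
/- If A ∈ ℝ^{m×n}, b ∈ ℝ^m, J is a signature matrix, and M = AᵀJA is positive definite, then the indefinite least squares problem min_x (b − Ax)ᵀJ(b − Ax) has the unique minimizer x = M⁻¹AᵀJb. -/
/-!
Write `r = b - A x` for the residual at `x = M⁻¹AᵀJb`; then `AᵀJr = 0` (the normal equations).
Since `J` is symmetric, expanding `f (x + d)` kills both cross terms and leaves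
`f (x + d) = f x + dᵀ M d`, which exceeds `f x` for `d ≠ 0` because `M` is positive definite.
-/

open Matrix

namespace Matrix

variable {m n R : Type*} [Fintype m] [Fintype n] [CommRing R]

theorem mulVec_dotProduct_mulVec (A : Matrix m n R) (J : Matrix m m R) (u : n → R) (w : m → R) :
    A *ᵥ u ⬝ᵥ J *ᵥ w = u ⬝ᵥ (Aᵀ * J) *ᵥ w := by
  rw [dotProduct_mulVec, dotProduct_mulVec, ← vecMul_transpose, vecMul_vecMul]

theorem IsSymm.dotProduct_mulVec_comm {J : Matrix m m R} (hJ : J.IsSymm) (v w : m → R) :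
    v ⬝ᵥ J *ᵥ w = w ⬝ᵥ J *ᵥ v := by
  rw [dotProduct_mulVec, ← mulVec_transpose, hJ.eq, dotProduct_comm]

theorem IsSymm.residual_quadForm_add {J : Matrix m m R} (hJ : J.IsSymm) (A : Matrix m n R)
    (b : m → R) (x d : n → R) (hnormal : (Aᵀ * J) *ᵥ (b - A *ᵥ x) = 0) :
    (b - A *ᵥ (x + d)) ⬝ᵥ J *ᵥ (b - A *ᵥ (x + d)) =
      (b - A *ᵥ x) ⬝ᵥ J *ᵥ (b - A *ᵥ x) + d ⬝ᵥ (Aᵀ * J * A) *ᵥ d := by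
  set r := b - A *ᵥ x
  have hcross : A *ᵥ d ⬝ᵥ J *ᵥ r = 0 := by
    rw [mulVec_dotProduct_mulVec, hnormal, dotProduct_zero]
  have hsplit : b - A *ᵥ (x + d) = r - A *ᵥ d := by
    rw [mulVec_add, sub_add_eq_sub_sub]
  rw [hsplit, sub_dotProduct, mulVec_sub, dotProduct_sub, dotProduct_sub,
    hJ.dotProduct_mulVec_comm r (A *ᵥ d), hcross, mulVec_dotProduct_mulVec A J d, mulVec_mulVec]
  ring

end Matrix

/-- If `M = AᵀJA` is positive definite, the indefinite least squares problem
`min_x (b − Ax)ᵀJ(b − Ax)` has the unique minimizer `x = M⁻¹AᵀJb`. -/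
theorem ils_unique_minimizer {p q n : ℕ}
    (A : Matrix (Fin p ⊕ Fin q) (Fin n) ℝ) (b : Fin p ⊕ Fin q → ℝ)
    (J : Matrix (Fin p ⊕ Fin q) (Fin p ⊕ Fin q) ℝ)
    (hJ : J = Matrix.fromBlocks 1 0 0 (-1))
    (M : Matrix (Fin n) (Fin n) ℝ) (hM : M = Aᵀ * J * A)
    (hPD : M.PosDef)
    (f : (Fin n → ℝ) → ℝ)
    (hf : ∀ z, f z = (b - A.mulVec z) ⬝ᵥ J.mulVec (b - A.mulVec z))
    (x : Fin n → ℝ) (hx : x = (M⁻¹ * Aᵀ * J).mulVec b) :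
    ∀ y, y ≠ x → f x < f y := by
  intro y hy
  have hJsymm : J.IsSymm := hJ ▸ isSymm_one.fromBlocks (by simp) isSymm_one.neg
  have hnormal : (Aᵀ * J) *ᵥ (b - A *ᵥ x) = 0 := by
    rw [mulVec_sub, mulVec_mulVec, ← hM, hx, mulVec_mulVec, Matrix.mul_assoc,
      mul_nonsing_inv_cancel_left _ _ hPD.det_pos.ne'.isUnit, sub_self]
  have hy_split : y = x + (y - x) := (add_sub_cancel x y).symm
  have hgap : 0 < (y - x) ⬝ᵥ M *ᵥ (y - x) := by
    simpa using hPD.dotProduct_mulVec_pos (sub_ne_zero_of_ne hy)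
  rw [hf, hf, hy_split, hJsymm.residual_quadForm_add A b x (y - x) hnormal, ← hM]
  linarith
end

section
/- Let L ∈ ℝ^{n×k}, M ∈ ℝ^{n×n} invertible and symmetric, A ∈ ℝ^{m×n}, J a signature matrix with J² = I, r ∈ ℝ^m, x ∈ ℝ^n, and let M₁ = ((Jr)ᵀ ⊗ (LᵀM⁻¹))Π_{mn} − xᵀ ⊗ (LᵀM⁻¹AᵀJ), where Π_{mn} is the vec-permutation matrix. Then M₁M₁ᵀ = ‖r‖₂² LᵀM⁻²L + ‖x‖₂² LᵀM⁻¹AᵀAM⁻¹L − LᵀM⁻¹xrᵀAM⁻¹L − LᵀM⁻¹Aᵀrxᵀ M⁻¹L. -/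
open Matrix Kronecker

/-- The Euclidean norm of a vector. -/
noncomputable def euclNorm {ι : Type*} [Fintype ι] (v : ι → ℝ) : ℝ :=
  Real.sqrt (∑ i, v i ^ 2)

/-- The vec-permutation matrix `Π_{mn}`, satisfying `Π_{mn} vec(A) = vec(Aᵀ)`.
Here `vec X` of a matrix `X : Matrix ι (Fin n) ℝ` is indexed by `Fin n × ι`
(column index first), so `Π : Matrix (ι × Fin n) (Fin n × ι) ℝ`. -/
def vecPerm (ι : Type*) (n : ℕ) [DecidableEq ι] :
    Matrix (ι × Fin n) (Fin n × ι) ℝ :=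
  Matrix.of fun a b => if a.1 = b.2 ∧ a.2 = b.1 then 1 else 0

private lemma key_sum {α β : Type*} [Fintype α] [Fintype β]
    (u w w' : α → ℝ) (v v' x : β → ℝ) :
    (∑ c, ∑ s, (u s * v c - x c * w s) * (u s * v' c - x c * w' s)) =
    (∑ s, u s ^ 2) * (∑ c, v c * v' c) + (∑ c, x c ^ 2) * (∑ s, w s * w' s)
     - (∑ c, v c * x c) * (∑ s, u s * w' s) - (∑ c, x c * v' c) * (∑ s, u s * w s) := by
  rw [Finset.sum_mul_sum, Finset.sum_mul_sum, Finset.sum_mul_sum, Finset.sum_mul_sum]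
  rw [Finset.sum_comm (s := Finset.univ) (t := Finset.univ)
    (f := fun s c => u s ^ 2 * (v c * v' c))]
  simp only [← Finset.sum_sub_distrib, ← Finset.sum_add_distrib]
  refine Finset.sum_congr rfl fun c _ => ?_
  refine Finset.sum_congr rfl fun s _ => ?_
  ring

/-- For `M₁ = ((Jr)ᵀ ⊗ (LᵀM⁻¹))Π_{mn} − xᵀ ⊗ (LᵀM⁻¹AᵀJ)` with `M` symmetric
invertible and `J = diag(I_p, −I_q)` a signature matrix (so `J² = I`):
`M₁M₁ᵀ = ‖r‖₂² LᵀM⁻²L + ‖x‖₂² LᵀM⁻¹AᵀAM⁻¹L − LᵀM⁻¹xrᵀAM⁻¹L − LᵀM⁻¹AᵀrxᵀM⁻¹L`. -/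
theorem M1_mul_M1_transpose {p q n k : ℕ}
    (L : Matrix (Fin n) (Fin k) ℝ)
    (M : Matrix (Fin n) (Fin n) ℝ) (hMsymm : Mᵀ = M) (hMinv : IsUnit M.det)
    (A : Matrix (Fin p ⊕ Fin q) (Fin n) ℝ)
    (J : Matrix (Fin p ⊕ Fin q) (Fin p ⊕ Fin q) ℝ)
    (hJ : J = Matrix.fromBlocks 1 0 0 (-1))
    (r : Fin p ⊕ Fin q → ℝ) (x : Fin n → ℝ)
    (rowJr : Matrix (Fin 1) (Fin p ⊕ Fin q) ℝ)
    (hrowJr : rowJr = Matrix.of fun _ j => J.mulVec r j)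
    (xrow : Matrix (Fin 1) (Fin n) ℝ)
    (hxrow : xrow = Matrix.of fun _ j => x j)
    (M₁ : Matrix (Fin 1 × Fin k) (Fin n × (Fin p ⊕ Fin q)) ℝ)
    (hM₁ : M₁ = (rowJr ⊗ₖ (Lᵀ * M⁻¹)) * vecPerm (Fin p ⊕ Fin q) n -
      xrow ⊗ₖ (Lᵀ * M⁻¹ * Aᵀ * J)) :
    M₁ * M₁ᵀ =
      ((euclNorm r ^ 2) • (Lᵀ * M⁻¹ * M⁻¹ * L) +
        (euclNorm x ^ 2) • (Lᵀ * M⁻¹ * Aᵀ * A * M⁻¹ * L) -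
        Lᵀ * M⁻¹ * Matrix.vecMulVec x r * A * M⁻¹ * L -
        Lᵀ * M⁻¹ * Aᵀ * Matrix.vecMulVec r x * M⁻¹ * L).submatrix
          Prod.snd Prod.snd := by
  -- basic facts about J and M
  have hJT : Jᵀ = J := by
    rw [hJ, Matrix.fromBlocks_transpose]
    simp
  have hJ2 : J * J = 1 := by
    rw [hJ, Matrix.fromBlocks_multiply]
    simp
  have hMi : M⁻¹ᵀ = M⁻¹ := by
    rw [Matrix.transpose_nonsing_inv, hMsymm]
  have hNT : (Lᵀ * M⁻¹)ᵀ = M⁻¹ * L := by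
    rw [Matrix.transpose_mul, hMi, Matrix.transpose_transpose]
  -- entrywise formula for M₁
  have hentry : ∀ (i : Fin 1) (a : Fin k) (c : Fin n) (s : Fin p ⊕ Fin q),
      M₁ (i, a) (c, s) = J.mulVec r s * (Lᵀ * M⁻¹) a c
        - x c * (Lᵀ * M⁻¹ * Aᵀ * J) a s := by
    intro i a c s
    subst hM₁ hrowJr hxrow
    simp [Matrix.sub_apply, Matrix.mul_apply, vecPerm, kroneckerMap_apply,
      Fintype.sum_prod_type, mul_ite, ite_and, Finset.sum_ite_eq, Finset.sum_ite_eq',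
      Matrix.transpose_apply]
  -- norm facts
  have s1 : (∑ s, J.mulVec r s ^ 2) = euclNorm r ^ 2 := by
    have h : ∀ s, J.mulVec r s ^ 2 = r s ^ 2 := by
      intro s
      cases s with
      | inl i =>
        have : J.mulVec r (Sum.inl i) = r (Sum.inl i) := by
          simp [hJ, Matrix.mulVec, dotProduct, Fintype.sum_sum_type,
            Matrix.one_apply, ite_mul, Finset.sum_ite_eq]
        rw [this]
      | inr i =>
        have : J.mulVec r (Sum.inr i) = - r (Sum.inr i) := by
          simp [hJ, Matrix.mulVec, dotProduct, Fintype.sum_sum_type,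
            Matrix.one_apply, ite_mul, Finset.sum_ite_eq]
        rw [this, neg_sq]
    rw [Finset.sum_congr rfl fun s _ => h s, euclNorm, Real.sq_sqrt]
    positivity
  have s1' : (∑ c, x c ^ 2) = euclNorm x ^ 2 := by
    rw [euclNorm, Real.sq_sqrt]
    positivity
  -- the sum over s of u s * P e s
  have h6 : ∀ e, (∑ s, J.mulVec r s * (Lᵀ * M⁻¹ * Aᵀ * J) e s)
      = ((Lᵀ * M⁻¹ * Aᵀ).mulVec r) e := by
    intro e
    have h1 : (∑ s, J.mulVec r s * (Lᵀ * M⁻¹ * Aᵀ * J) e s)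
        = (Lᵀ * M⁻¹ * Aᵀ * J).mulVec (J.mulVec r) e := by
      simp [Matrix.mulVec, dotProduct, mul_comm]
    rw [h1, Matrix.mulVec_mulVec, Matrix.mul_assoc (Lᵀ * M⁻¹ * Aᵀ) J J, hJ2,
      Matrix.mul_one]
  ext ⟨i, a⟩ ⟨j, b⟩
  rw [Matrix.mul_apply]
  simp only [Matrix.transpose_apply]
  rw [Fintype.sum_prod_type]
  simp only [hentry]
  rw [key_sum (J.mulVec r) (fun s => (Lᵀ * M⁻¹ * Aᵀ * J) a s)
    (fun s => (Lᵀ * M⁻¹ * Aᵀ * J) b s) (fun c => (Lᵀ * M⁻¹) a c)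
    (fun c => (Lᵀ * M⁻¹) b c) x]
  simp only [Matrix.submatrix_apply, Matrix.sub_apply, Matrix.add_apply,
    Matrix.smul_apply, smul_eq_mul]
  rw [s1, s1', h6 a, h6 b]
  -- term 1
  have t1 : (∑ c, (Lᵀ * M⁻¹) a c * (Lᵀ * M⁻¹) b c) = (Lᵀ * M⁻¹ * M⁻¹ * L) a b := by
    have e1 : Lᵀ * M⁻¹ * M⁻¹ * L = (Lᵀ * M⁻¹) * (Lᵀ * M⁻¹)ᵀ := by
      rw [hNT]
      simp only [Matrix.mul_assoc]
    rw [e1, Matrix.mul_apply]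
    simp [Matrix.transpose_apply]
  -- term 2
  have t2 : (∑ s, (Lᵀ * M⁻¹ * Aᵀ * J) a s * (Lᵀ * M⁻¹ * Aᵀ * J) b s)
      = (Lᵀ * M⁻¹ * Aᵀ * A * M⁻¹ * L) a b := by
    have e2 : Lᵀ * M⁻¹ * Aᵀ * A * M⁻¹ * L
        = (Lᵀ * M⁻¹ * Aᵀ * J) * (Lᵀ * M⁻¹ * Aᵀ * J)ᵀ := by
      rw [Matrix.transpose_mul, hJT, Matrix.transpose_mul, Matrix.transpose_transpose,
        hNT]
      calc Lᵀ * M⁻¹ * Aᵀ * A * M⁻¹ * L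
          = Lᵀ * M⁻¹ * Aᵀ * (J * (J * (A * (M⁻¹ * L)))) := by
            rw [← Matrix.mul_assoc J J, hJ2, Matrix.one_mul]
            simp only [Matrix.mul_assoc]
        _ = Lᵀ * M⁻¹ * Aᵀ * J * (J * (A * (M⁻¹ * L))) := by
            simp only [Matrix.mul_assoc]
    rw [e2, Matrix.mul_apply]
    simp [Matrix.transpose_apply]
  -- term 3
  have t3 : (∑ c, (Lᵀ * M⁻¹) a c * x c) * ((Lᵀ * M⁻¹ * Aᵀ).mulVec r b)
      = (Lᵀ * M⁻¹ * Matrix.vecMulVec x r * A * M⁻¹ * L) a b := by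
    have e3 : Lᵀ * M⁻¹ * Matrix.vecMulVec x r * A * M⁻¹ * L
        = (Lᵀ * M⁻¹) * (Matrix.vecMulVec x r * (A * (M⁻¹ * L))) := by
      simp only [Matrix.mul_assoc]
    rw [e3, Matrix.mul_apply]
    have hQ : ∀ s, (A * (M⁻¹ * L)) s b = (Lᵀ * M⁻¹ * Aᵀ) b s := by
      intro s
      have : (Lᵀ * M⁻¹ * Aᵀ) = (A * (M⁻¹ * L))ᵀ := by
        rw [Matrix.transpose_mul, ← hNT, Matrix.transpose_transpose]
      rw [this, Matrix.transpose_apply]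
    simp only [Matrix.mul_apply, Matrix.vecMulVec_apply, Matrix.mulVec, dotProduct]
    rw [Finset.sum_mul_sum]
    refine Finset.sum_congr rfl fun c _ => ?_
    rw [Finset.mul_sum]
    refine Finset.sum_congr rfl fun s _ => ?_
    have := hQ s
    simp only [Matrix.mul_apply] at this
    rw [← this]
    ring
  -- term 4
  have t4 : (∑ c, x c * (Lᵀ * M⁻¹) b c) * ((Lᵀ * M⁻¹ * Aᵀ).mulVec r a)
      = (Lᵀ * M⁻¹ * Aᵀ * Matrix.vecMulVec r x * M⁻¹ * L) a b := by
    have e4 : Lᵀ * M⁻¹ * Aᵀ * Matrix.vecMulVec r x * M⁻¹ * L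
        = (Lᵀ * M⁻¹ * Aᵀ) * (Matrix.vecMulVec r x * (M⁻¹ * L)) := by
      simp only [Matrix.mul_assoc]
    rw [e4, Matrix.mul_apply]
    have hQ : ∀ c, (M⁻¹ * L) c b = (Lᵀ * M⁻¹) b c := by
      intro c
      rw [← hNT, Matrix.transpose_apply]
    simp only [Matrix.mul_apply, Matrix.vecMulVec_apply, Matrix.mulVec, dotProduct]
    rw [mul_comm, Finset.sum_mul_sum]
    refine Finset.sum_congr rfl fun s _ => ?_
    rw [Finset.mul_sum]
    refine Finset.sum_congr rfl fun c _ => ?_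
    have := hQ c
    simp only [Matrix.mul_apply] at this
    rw [← this]
    ring
  rw [t1, t2, t3, t4]
end

section
/- Let Ψ, β > 0, L ∈ ℝ^{n×k}, M ∈ ℝ^{n×n} symmetric invertible, A ∈ ℝ^{m×n}, r ∈ ℝ^m nonzero, x ∈ ℝ^n. Define K = [Ψ‖r‖₂(I_n − (1/‖r‖₂²)Aᵀrxᵀ), −βAᵀ, Ψ‖x‖₂Aᵀ(I_m − (1/‖r‖₂²)rrᵀ)] (block row matrix). Then LᵀM⁻¹KKᵀM⁻¹L = LᵀM⁻¹(Ψ²‖r‖₂²I_n + (Ψ²‖x‖₂² + β²)AᵀA − Ψ²(xrᵀA + Aᵀrxᵀ))M⁻¹L. -/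
/-!
Only the middle factor `K Kᵀ` needs computing, and it is the sum of the Gram matrices of the
three blocks of `K`. Since `P = I - ‖r‖⁻² r rᵀ` is an orthogonal projection, the third block
contributes `Ψ²‖x‖² Aᵀ P A`; its rank-one part `-Ψ²‖x‖²‖r‖⁻² Aᵀ r rᵀ A` cancels exactly the term
`Ψ²‖r‖²‖r‖⁻⁴‖x‖² Aᵀ r rᵀ A` coming from the first block.
-/

open Matrix

/-- The Euclidean norm of a vector. -/
noncomputable def enorm₂ {ι : Type*} [Fintype ι] (v : ι → ℝ) : ℝ :=
  Real.sqrt (∑ i, v i ^ 2)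

lemma enorm₂_sq {ι : Type*} [Fintype ι] (v : ι → ℝ) : enorm₂ v ^ 2 = v ⬝ᵥ v := by
  rw [enorm₂, Real.sq_sqrt (by positivity)]
  simp only [dotProduct, sq]

lemma enorm₂_ne_zero {ι : Type*} [Fintype ι] {v : ι → ℝ} (hv : v ≠ 0) : enorm₂ v ≠ 0 := by
  rw [← pow_ne_zero_iff two_ne_zero, enorm₂_sq]
  exact fun h => hv (dotProduct_self_eq_zero.mp h)

section Gram

variable {R : Type*} [CommRing R] {l m n p : Type*} [Fintype m]

lemma fromCols_mul_transpose_fromCols [Fintype p] (A : Matrix l m R) (B : Matrix l p R) :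
    fromCols A B * (fromCols A B)ᵀ = A * Aᵀ + B * Bᵀ := by
  rw [transpose_fromCols, fromCols_mul_fromRows]

lemma smul_mul_transpose_smul (s : R) (A : Matrix l m R) :
    (s • A) * (s • A)ᵀ = s ^ 2 • (A * Aᵀ) := by
  rw [transpose_smul, Matrix.smul_mul, Matrix.mul_smul, smul_smul, sq]

lemma one_sub_smul_vecMulVec_self_mul_self [DecidableEq m] (r : m → R) {c : R}
    (hc : c * (r ⬝ᵥ r) = 1) :
    (1 - c • vecMulVec r r) * (1 - c • vecMulVec r r) = 1 - c • vecMulVec r r := by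
  have hV : vecMulVec r r * vecMulVec r r = (r ⬝ᵥ r) • vecMulVec r r := by
    rw [vecMulVec_mul_vecMulVec, vecMulVec_smul]
  have : c • c • ((r ⬝ᵥ r) • vecMulVec r r) = c • vecMulVec r r := by
    rw [smul_comm c (r ⬝ᵥ r), smul_smul (r ⬝ᵥ r), mul_comm, hc, one_smul]
  simp only [sub_mul, mul_sub, Matrix.one_mul, Matrix.mul_one, Matrix.smul_mul, Matrix.mul_smul,
    hV, this]
  abel

lemma mul_one_sub_smul_vecMulVec_self_mul_transpose [DecidableEq m] (A : Matrix m n R)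
    (r : m → R) {c : R} (hc : c * (r ⬝ᵥ r) = 1) :
    (Aᵀ * (1 - c • vecMulVec r r)) * (Aᵀ * (1 - c • vecMulVec r r))ᵀ
      = Aᵀ * A - c • (Aᵀ * vecMulVec r r * A) := by
  have hsymm : (1 - c • vecMulVec r r)ᵀ = 1 - c • vecMulVec r r := by
    simp only [transpose_sub, transpose_one, transpose_smul, transpose_vecMulVec]
  rw [transpose_mul, hsymm, transpose_transpose, Matrix.mul_assoc, ← Matrix.mul_assoc _ _ A,
    one_sub_smul_vecMulVec_self_mul_self r hc, Matrix.sub_mul, Matrix.mul_sub, Matrix.one_mul,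
    Matrix.smul_mul, Matrix.mul_smul, Matrix.mul_assoc]

lemma one_sub_smul_mul_vecMulVec_mul_transpose [Fintype n] [DecidableEq n] (A : Matrix m n R)
    (r : m → R) (x : n → R) (c : R) :
    (1 - c • (Aᵀ * vecMulVec r x)) * (1 - c • (Aᵀ * vecMulVec r x))ᵀ
      = 1 - c • (vecMulVec x r * A + Aᵀ * vecMulVec r x)
        + (c ^ 2 * (x ⬝ᵥ x)) • (Aᵀ * vecMulVec r r * A) := by
  have hNN :
      Aᵀ * vecMulVec r x * (vecMulVec x r * A) = (x ⬝ᵥ x) • (Aᵀ * vecMulVec r r * A) := by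
    rw [Matrix.mul_assoc, ← Matrix.mul_assoc (vecMulVec r x), vecMulVec_mul_vecMulVec,
      vecMulVec_smul, Matrix.smul_mul, Matrix.mul_smul, Matrix.mul_assoc]
  simp only [transpose_sub, transpose_one, transpose_smul, transpose_mul, transpose_vecMulVec,
    transpose_transpose, sub_mul, mul_sub, Matrix.one_mul, Matrix.mul_one, Matrix.smul_mul,
    Matrix.mul_smul, hNN, smul_smul, smul_add]
  module

end Gram

section ILS

variable {m n : Type*} [Fintype m] [Fintype n] [DecidableEq m] [DecidableEq n]

noncomputable def ilsFactor (Ψ β : ℝ) (A : Matrix m n ℝ) (r : m → ℝ) (x : n → ℝ) :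
    Matrix n (n ⊕ (m ⊕ m)) ℝ :=
  fromCols ((Ψ * enorm₂ r) • (1 - (enorm₂ r ^ 2)⁻¹ • (Aᵀ * vecMulVec r x)))
    (fromCols (-(β • Aᵀ)) ((Ψ * enorm₂ x) • (Aᵀ * (1 - (enorm₂ r ^ 2)⁻¹ • vecMulVec r r))))

lemma ilsFactor_mul_transpose (Ψ β : ℝ) (A : Matrix m n ℝ) {r : m → ℝ} (hr : r ≠ 0) (x : n → ℝ) :
    ilsFactor Ψ β A r x * (ilsFactor Ψ β A r x)ᵀ =
      (Ψ ^ 2 * enorm₂ r ^ 2) • 1 + (Ψ ^ 2 * enorm₂ x ^ 2 + β ^ 2) • (Aᵀ * A) -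
        Ψ ^ 2 • (vecMulVec x r * A + Aᵀ * vecMulVec r x) := by
  have hρ : enorm₂ r ≠ 0 := enorm₂_ne_zero hr
  have hc : (enorm₂ r ^ 2)⁻¹ * (r ⬝ᵥ r) = 1 := by
    rw [← enorm₂_sq, inv_mul_cancel₀ (pow_ne_zero 2 hρ)]
  have hββ : -(β • Aᵀ) * (-(β • Aᵀ))ᵀ = β ^ 2 • (Aᵀ * A) := by
    rw [transpose_neg, Matrix.neg_mul, Matrix.mul_neg, neg_neg, smul_mul_transpose_smul,
      transpose_transpose]
  rw [ilsFactor, fromCols_mul_transpose_fromCols, fromCols_mul_transpose_fromCols,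
    smul_mul_transpose_smul, smul_mul_transpose_smul, one_sub_smul_mul_vecMulVec_mul_transpose,
    mul_one_sub_smul_vecMulVec_self_mul_transpose A r hc, hββ, ← enorm₂_sq]
  match_scalars <;> field_simp <;> ring

end ILS

theorem ils_condition_number_factorization_general {m n k : ℕ}
    (Ψ β : ℝ)
    (L : Matrix (Fin n) (Fin k) ℝ)
    (M : Matrix (Fin n) (Fin n) ℝ)
    (A : Matrix (Fin m) (Fin n) ℝ)
    (r : Fin m → ℝ) (hr : r ≠ 0) (x : Fin n → ℝ)
    (K : Matrix (Fin n) (Fin n ⊕ (Fin m ⊕ Fin m)) ℝ)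
    (hK : K = Matrix.fromCols
      ((Ψ * enorm₂ r) •
        ((1 : Matrix (Fin n) (Fin n) ℝ) -
          (enorm₂ r ^ 2)⁻¹ • (Aᵀ * Matrix.vecMulVec r x)))
      (Matrix.fromCols (-(β • Aᵀ))
        ((Ψ * enorm₂ x) •
          (Aᵀ * ((1 : Matrix (Fin m) (Fin m) ℝ) -
            (enorm₂ r ^ 2)⁻¹ • Matrix.vecMulVec r r))))) :
    Lᵀ * M⁻¹ * K * Kᵀ * M⁻¹ * L =
      Lᵀ * M⁻¹ *
        ((Ψ ^ 2 * enorm₂ r ^ 2) • (1 : Matrix (Fin n) (Fin n) ℝ) +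
          (Ψ ^ 2 * enorm₂ x ^ 2 + β ^ 2) • (Aᵀ * A) -
          Ψ ^ 2 • (Matrix.vecMulVec x r * A + Aᵀ * Matrix.vecMulVec r x)) *
        M⁻¹ * L := by
  rw [show K = ilsFactor Ψ β A r x from hK, Matrix.mul_assoc (Lᵀ * M⁻¹),
    ilsFactor_mul_transpose Ψ β A hr x]

/-- With `K = [Ψ‖r‖₂(I_n − ‖r‖₂⁻²Aᵀrxᵀ), −βAᵀ, Ψ‖x‖₂Aᵀ(I_m − ‖r‖₂⁻²rrᵀ)]`,
one has `LᵀM⁻¹KKᵀM⁻¹L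
  = LᵀM⁻¹(Ψ²‖r‖₂²I_n + (Ψ²‖x‖₂² + β²)AᵀA − Ψ²(xrᵀA + Aᵀrxᵀ))M⁻¹L`. -/
theorem ils_condition_number_factorization {m n k : ℕ}
    (Ψ β : ℝ) (hΨ : 0 < Ψ) (hβ : 0 < β)
    (L : Matrix (Fin n) (Fin k) ℝ)
    (M : Matrix (Fin n) (Fin n) ℝ) (hMsymm : Mᵀ = M) (hMinv : IsUnit M.det)
    (A : Matrix (Fin m) (Fin n) ℝ)
    (r : Fin m → ℝ) (hr : r ≠ 0) (x : Fin n → ℝ)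
    (K : Matrix (Fin n) (Fin n ⊕ (Fin m ⊕ Fin m)) ℝ)
    (hK : K = Matrix.fromCols
      ((Ψ * enorm₂ r) •
        ((1 : Matrix (Fin n) (Fin n) ℝ) -
          (enorm₂ r ^ 2)⁻¹ • (Aᵀ * Matrix.vecMulVec r x)))
      (Matrix.fromCols (-(β • Aᵀ))
        ((Ψ * enorm₂ x) •
          (Aᵀ * ((1 : Matrix (Fin m) (Fin m) ℝ) -
            (enorm₂ r ^ 2)⁻¹ • Matrix.vecMulVec r r))))) :
    Lᵀ * M⁻¹ * K * Kᵀ * M⁻¹ * L =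
      Lᵀ * M⁻¹ *
        ((Ψ ^ 2 * enorm₂ r ^ 2) • (1 : Matrix (Fin n) (Fin n) ℝ) +
          (Ψ ^ 2 * enorm₂ x ^ 2 + β ^ 2) • (Aᵀ * A) -
          Ψ ^ 2 • (Matrix.vecMulVec x r * A + Aᵀ * Matrix.vecMulVec r x)) *
        M⁻¹ * L :=
  ils_condition_number_factorization_general Ψ β L M A r hr x K hK
end

section
/- Let A ∈ ℝ^{m×n}, b ∈ ℝ^m, and σ̃_{n+1} the smallest singular value of [A, b]; assume σ̃_{n+1} < σ_n, the smallest singular value of A. With B = σ̃_{n+1} I_n, d = 0, Ã = [A; B], b̃ = [b; d], and J̃ = diag(I_m, −I_n), the matrix M̃ = ÃᵀJ̃Ã = AᵀA − σ̃²_{n+1} I_n is symmetric positive definite, and the unique solution of the indefinite least squares problem min_x (b̃ − Ãx)ᵀ J̃ (b̃ − Ãx) is x = (AᵀA − σ̃²_{n+1} I_n)⁻¹ Aᵀ b. -/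
open Matrix

/-- The smallest singular value of a matrix:
`σ_min(C) = min_{‖v‖₂ = 1} ‖Cv‖₂`. -/
noncomputable def smin {p q : Type*} [Fintype p] [Fintype q]
    (C : Matrix p q ℝ) : ℝ :=
  ⨅ v : {v : q → ℝ // euclNorm v = 1}, euclNorm (C.mulVec v.1)

/-!
The quadratic form of `AᵀA - σ̃²I` is `‖Ax‖² - σ̃²‖x‖² ≥ (σ_min(A)² - σ̃²)‖x‖²`, so it is positive
definite as soon as `0 ≤ σ̃ < σ_min(A)`. For any symmetric `J` with `M = ÃᵀJÃ`, a solution `x` of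
the normal equations `Mx = ÃᵀJb̃` satisfies `f y - f x = (y - x)ᵀM(y - x)`, because the cross term
is `(y - x)ᵀÃᵀJ(b̃ - Ãx) = 0`; hence `x` is the strict minimiser when `M` is positive definite.
For the augmented data `ÃᵀJ̃Ã = AᵀA - BᵀB` and `ÃᵀJ̃b̃ = Aᵀb`.
-/

section EuclideanNorm

variable {ι : Type*} [Fintype ι]

lemma euclNorm_nonneg (v : ι → ℝ) : 0 ≤ euclNorm v :=
  Real.sqrt_nonneg _

lemma euclNorm_sq (v : ι → ℝ) : euclNorm v ^ 2 = v ⬝ᵥ v := by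
  rw [euclNorm, Real.sq_sqrt (Finset.sum_nonneg fun i _ => sq_nonneg _)]
  simp only [dotProduct, pow_two]

lemma euclNorm_pos {v : ι → ℝ} (hv : v ≠ 0) : 0 < euclNorm v := by
  refine Real.sqrt_pos.2 (lt_of_le_of_ne (Finset.sum_nonneg fun i _ => sq_nonneg _) ?_)
  intro h
  obtain ⟨i, hi⟩ := Function.ne_iff.1 hv
  have := (Finset.sum_eq_zero_iff_of_nonneg (fun i _ => sq_nonneg (v i))).1 h.symm i
    (Finset.mem_univ _)
  exact hi (pow_eq_zero_iff two_ne_zero |>.1 this)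

lemma euclNorm_smul (c : ℝ) (v : ι → ℝ) : euclNorm (c • v) = |c| * euclNorm v := by
  simp only [euclNorm, Pi.smul_apply, smul_eq_mul, mul_pow, ← Finset.mul_sum,
    Real.sqrt_mul (sq_nonneg c), Real.sqrt_sq_eq_abs]

end EuclideanNorm

section SmallestSingularValue

variable {p q : Type*} [Fintype p] [Fintype q]

lemma smin_nonneg (C : Matrix p q ℝ) : 0 ≤ smin C :=
  Real.iInf_nonneg fun _ => euclNorm_nonneg _

lemma smin_le_euclNorm_mulVec (C : Matrix p q ℝ) {v : q → ℝ} (hv : euclNorm v = 1) :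
    smin C ≤ euclNorm (C *ᵥ v) :=
  ciInf_le ⟨0, by rintro _ ⟨w, rfl⟩; exact euclNorm_nonneg _⟩
    (⟨v, hv⟩ : {v : q → ℝ // euclNorm v = 1})

lemma smin_mul_euclNorm_le (C : Matrix p q ℝ) (v : q → ℝ) :
    smin C * euclNorm v ≤ euclNorm (C *ᵥ v) := by
  rcases eq_or_ne v 0 with rfl | hv
  · simp [euclNorm]
  have hpos := euclNorm_pos hv
  have hunit : euclNorm ((euclNorm v)⁻¹ • v) = 1 := by
    rw [euclNorm_smul, abs_of_pos (inv_pos.2 hpos), inv_mul_cancel₀ hpos.ne']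
  have h := smin_le_euclNorm_mulVec C hunit
  rwa [mulVec_smul, euclNorm_smul, abs_of_pos (inv_pos.2 hpos), le_inv_mul_iff₀ hpos,
    mul_comm] at h

lemma posDef_transpose_mul_self_sub_sq_smul_one [DecidableEq q] (A : Matrix p q ℝ) {s : ℝ}
    (hs₀ : 0 ≤ s) (hs : s < smin A) : (Aᵀ * A - s ^ 2 • (1 : Matrix q q ℝ)).PosDef := by
  refine posDef_iff_dotProduct_mulVec.2 ⟨?_, fun v hv => ?_⟩
  · simp [IsHermitian, transpose_sub, transpose_mul, transpose_smul,
      conjTranspose_eq_transpose_of_trivial]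
  have hquad :
      v ⬝ᵥ (Aᵀ * A - s ^ 2 • 1) *ᵥ v = euclNorm (A *ᵥ v) ^ 2 - s ^ 2 * euclNorm v ^ 2 := by
    rw [sub_mulVec, dotProduct_sub, smul_mulVec, one_mulVec, dotProduct_smul, ← mulVec_mulVec,
      dotProduct_mulVec, vecMul_transpose, euclNorm_sq, euclNorm_sq, smul_eq_mul]
  have hlt : s * euclNorm v < euclNorm (A *ᵥ v) :=
    (mul_lt_mul_of_pos_right hs (euclNorm_pos hv)).trans_le (smin_mul_euclNorm_le A v)
  rw [star_trivial, hquad]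
  nlinarith [mul_nonneg hs₀ (euclNorm_nonneg v)]

end SmallestSingularValue

section IndefiniteLeastSquares

variable {k l : Type*} [Fintype k] [Fintype l]

lemma indefLeastSquares_sub_eq_of_normalEq (A : Matrix k l ℝ) {J : Matrix k k ℝ}
    (hJ : J.IsSymm) (b : k → ℝ) {x : l → ℝ} (hx : (Aᵀ * J * A) *ᵥ x = Aᵀ *ᵥ (J *ᵥ b))
    (y : l → ℝ) :
    (b - A *ᵥ y) ⬝ᵥ J *ᵥ (b - A *ᵥ y) - (b - A *ᵥ x) ⬝ᵥ J *ᵥ (b - A *ᵥ x) =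
      (y - x) ⬝ᵥ (Aᵀ * J * A) *ᵥ (y - x) := by
  set r := b - A *ᵥ x
  set u := A *ᵥ (y - x)
  have hres : b - A *ᵥ y = r - u := by simp only [r, u, mulVec_sub]; abel
  have hJsymm : r ⬝ᵥ J *ᵥ u = u ⬝ᵥ J *ᵥ r := by
    rw [← dotProduct_transpose_mulVec, hJ.eq]
  have horth : u ⬝ᵥ J *ᵥ r = 0 := by
    rw [dotProduct_comm, ← dotProduct_transpose_mulVec, mulVec_sub, mulVec_sub, ← hx,
      mulVec_mulVec, mulVec_mulVec, Matrix.mul_assoc, sub_self, dotProduct_zero]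
  have hquad : u ⬝ᵥ J *ᵥ u = (y - x) ⬝ᵥ (Aᵀ * J * A) *ᵥ (y - x) := by
    rw [dotProduct_comm, ← dotProduct_transpose_mulVec, mulVec_mulVec, mulVec_mulVec,
      Matrix.mul_assoc]
  clear_value r u
  rw [hres, mulVec_sub, dotProduct_sub, sub_dotProduct, sub_dotProduct, hJsymm, horth, hquad]
  ring

lemma indefLeastSquares_lt_of_posDef_of_normalEq (A : Matrix k l ℝ) {J : Matrix k k ℝ}
    (hJ : J.IsSymm) (b : k → ℝ) (hM : (Aᵀ * J * A).PosDef) {x : l → ℝ}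
    (hx : (Aᵀ * J * A) *ᵥ x = Aᵀ *ᵥ (J *ᵥ b)) {y : l → ℝ} (hy : y ≠ x) :
    (b - A *ᵥ x) ⬝ᵥ J *ᵥ (b - A *ᵥ x) < (b - A *ᵥ y) ⬝ᵥ J *ᵥ (b - A *ᵥ y) := by
  have h := hM.dotProduct_mulVec_pos (sub_ne_zero.2 hy)
  rw [star_trivial, ← indefLeastSquares_sub_eq_of_normalEq A hJ b hx y] at h
  linarith

end IndefiniteLeastSquares

section Augmentation

variable {k l : Type*} [DecidableEq k] [DecidableEq l]

lemma signature_isSymm : (fromBlocks 1 0 0 (-1) : Matrix (k ⊕ l) (k ⊕ l) ℝ).IsSymm := by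
  simp [IsSymm, fromBlocks_transpose]

variable [Fintype k] [Fintype l]

lemma fromRows_transpose_mul_signature_mul_fromRows {q : Type*} [Fintype q]
    (A : Matrix k q ℝ) (B : Matrix l q ℝ) :
    (fromRows A B)ᵀ * (fromBlocks 1 0 0 (-1) : Matrix (k ⊕ l) (k ⊕ l) ℝ) * fromRows A B =
      Aᵀ * A - Bᵀ * B := by
  rw [transpose_fromRows, Matrix.mul_assoc, fromBlocks_mul_fromRows, fromCols_mul_fromRows]
  simp [sub_eq_add_neg]

lemma fromRows_transpose_mulVec_signature_mulVec_sumElim_zero {q : Type*} [Fintype q]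
    (A : Matrix k q ℝ) (B : Matrix l q ℝ) (b : k → ℝ) :
    (fromRows A B)ᵀ *ᵥ ((fromBlocks 1 0 0 (-1) : Matrix (k ⊕ l) (k ⊕ l) ℝ) *ᵥ Sum.elim b 0) =
      Aᵀ *ᵥ b := by
  simp [fromBlocks_mulVec, transpose_fromRows]

end Augmentation

/-- With `σ̃ = σ_min([A, b]) < σ_min(A)`, `B = σ̃I_n`, `d = 0`,
`Ã = [A; B]`, `b̃ = [b; d]` and `J̃ = diag(I_m, −I_n)`: the matrix
`M̃ = ÃᵀJ̃Ã = AᵀA − σ̃²I_n` is positive definite and the unique solution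
of `min_x (b̃ − Ãx)ᵀJ̃(b̃ − Ãx)` is `x = (AᵀA − σ̃²I_n)⁻¹Aᵀb`. -/
theorem tls_as_special_ils {m n : ℕ}
    (A : Matrix (Fin m) (Fin n) ℝ) (b : Fin m → ℝ)
    (σtil : ℝ)
    (hσtil : σtil = smin (Matrix.fromCols A (Matrix.of fun i (_ : Fin 1) => b i)))
    (hlt : σtil < smin A)
    (B : Matrix (Fin n) (Fin n) ℝ) (hB : B = σtil • (1 : Matrix (Fin n) (Fin n) ℝ))
    (Atil : Matrix (Fin m ⊕ Fin n) (Fin n) ℝ) (hAtil : Atil = Matrix.fromRows A B)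
    (btil : Fin m ⊕ Fin n → ℝ) (hbtil : btil = Sum.elim b 0)
    (Jtil : Matrix (Fin m ⊕ Fin n) (Fin m ⊕ Fin n) ℝ)
    (hJtil : Jtil = Matrix.fromBlocks 1 0 0 (-1))
    (f : (Fin n → ℝ) → ℝ)
    (hf : ∀ z, f z = (btil - Atil.mulVec z) ⬝ᵥ Jtil.mulVec (btil - Atil.mulVec z))
    (x : Fin n → ℝ)
    (hx : x = (Aᵀ * A - σtil ^ 2 • (1 : Matrix (Fin n) (Fin n) ℝ))⁻¹.mulVec
        (Aᵀ.mulVec b)) :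
    Atilᵀ * Jtil * Atil = Aᵀ * A - σtil ^ 2 • (1 : Matrix (Fin n) (Fin n) ℝ) ∧
    (Aᵀ * A - σtil ^ 2 • (1 : Matrix (Fin n) (Fin n) ℝ)).PosDef ∧
    ∀ y, y ≠ x → f x < f y := by
  have hgram : Atilᵀ * Jtil * Atil = Aᵀ * A - σtil ^ 2 • (1 : Matrix (Fin n) (Fin n) ℝ) := by
    rw [hAtil, hJtil, fromRows_transpose_mul_signature_mul_fromRows, hB]
    simp [smul_smul, pow_two]
  have hpos : (Aᵀ * A - σtil ^ 2 • (1 : Matrix (Fin n) (Fin n) ℝ)).PosDef :=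
    posDef_transpose_mul_self_sub_sq_smul_one A (hσtil ▸ smin_nonneg _) hlt
  refine ⟨hgram, hpos, fun y hy => ?_⟩
  have hnormal : (Atilᵀ * Jtil * Atil) *ᵥ x = Atilᵀ *ᵥ (Jtil *ᵥ btil) := by
    rw [hgram, hAtil, hJtil, hbtil, fromRows_transpose_mulVec_signature_mulVec_sumElim_zero, hx,
      mulVec_mulVec, mul_nonsing_inv _ ((isUnit_iff_isUnit_det _).1 hpos.isUnit), one_mulVec]
  rw [hf, hf]
  exact indefLeastSquares_lt_of_posDef_of_normalEq Atil (hJtil ▸ signature_isSymm) btil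
    (hgram ▸ hpos) hnormal hy
end
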